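/- Assume: Z is a real normed space, S ⊆ Z is a closed convex cone with int S ≠ ∅; 𝒰 is a compact subset of a real topological vector space; for each x ∈ X the map u ↦ G_u(x) is S⁺-upper semicontinuous, i.e. the set {(λ,u,r) ∈ S⁺×𝒰×ℝ : λ(G_u(x)) ≥ r} is closed in Z*(weak*) × 𝒰 × ℝ; and the Slater-type condition (C₀) holds: for every u ∈ 𝒰 there exists x_u ∈ X with G_u(x_u) ∈ −int S. Then the robust moment cone 𝓜₀ is a closed subset of X*×ℝ (weak*-topology on X* times the usual topology on ℝ). -/

import Mathlib

/-!
Fix `s₀ ∈ int S`. Then `q ∈ 𝓜₀` iff some `λ ∈ S⁺`, `τ ≥ 0` with `λ s₀ + τ = 1` and `u ∈ 𝒰`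
satisfy `τ (⟨q.1, x⟩ - q.2) ≤ λ (G u x)` for all `x`: the Slater condition excludes `τ = 0`,
because a nonzero `λ ∈ S⁺` is positive on `int S`. Upper semicontinuity makes the set of these
`(λ, τ, u, q)` closed. Since `|λ z| ≤ λ s₀ ≤ 1` on a neighbourhood of `0`, Banach–Alaoglu
confines `λ` to a weak*-compact set, and `𝒰` is compact, so the projection onto `q` is closed.
-/

open Pointwise Filter Topology Set

theorem setOf_add_mem_and_sub_mem_mem_nhds {Z : Type*} [AddCommGroup Z] [TopologicalSpace Z]
    [IsTopologicalAddGroup Z] {S : Set Z} {y : Z} (hy : y ∈ interior S) :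
    {z | y + z ∈ S ∧ y - z ∈ S} ∈ 𝓝 (0 : Z) := by
  have hS : S ∈ 𝓝 y := mem_interior_iff_mem_nhds.mp hy
  have hadd : Tendsto (y + ·) (𝓝 0) (𝓝 y) := by
    simpa using (continuous_const_add y).tendsto 0
  have hsub : Tendsto (y - ·) (𝓝 0) (𝓝 y) := by
    simpa using (continuous_sub_left y).tendsto 0
  filter_upwards [hadd hS, hsub hS] with z hz₁ hz₂ using ⟨hz₁, hz₂⟩

section DualCone

variable {Z F : Type*} [AddCommGroup Z] [Module ℝ Z] [FunLike F Z ℝ] [LinearMapClass F ℝ Z ℝ]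
  {S : Set Z} {l : F} {y : Z}

theorem abs_apply_le_of_nonneg_on (hl : ∀ z ∈ S, 0 ≤ l z) {z : Z} (hadd : y + z ∈ S)
    (hsub : y - z ∈ S) : |l z| ≤ l y := by
  have h₁ := hl _ hadd
  have h₂ := hl _ hsub
  rw [map_add] at h₁
  rw [map_sub] at h₂
  exact abs_le.mpr ⟨by linarith, by linarith⟩

theorem apply_pos_of_mem_interior [TopologicalSpace Z] [IsTopologicalAddGroup Z]
    [ContinuousSMul ℝ Z] (hl : ∀ z ∈ S, 0 ≤ l z) {w : Z} (hw : l w ≠ 0) (hy : y ∈ interior S) :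
    0 < l y := by
  have hsmul : Tendsto (fun c : ℝ => c • w) (𝓝[>] 0) (𝓝 0) :=
    ((continuous_id.smul continuous_const).tendsto' 0 0 (zero_smul ℝ w)).mono_left
      nhdsWithin_le_nhds
  obtain ⟨c, ⟨hadd, hsub⟩, hc⟩ :=
    ((hsmul.eventually_mem (setOf_add_mem_and_sub_mem_mem_nhds hy)).and
      self_mem_nhdsWithin).exists
  calc 0 < c * |l w| := mul_pos hc (abs_pos.mpr hw)
    _ = |l (c • w)| := by rw [map_smul, smul_eq_mul, abs_mul, abs_of_pos hc]
    _ ≤ l y := abs_apply_le_of_nonneg_on hl hadd hsub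

end DualCone

theorem WeakDual.isCompact_dualCone_inter_apply_le_one {Z : Type*} [NormedAddCommGroup Z]
    [NormedSpace ℝ Z] {S : Set Z} {s₀ : Z} (hs₀ : s₀ ∈ interior S) :
    IsCompact {l : WeakDual ℝ Z | (∀ z ∈ S, 0 ≤ l z) ∧ l s₀ ≤ 1} := by
  refine (isCompact_polar ℝ (setOf_add_mem_and_sub_mem_mem_nhds hs₀)).of_isClosed_subset ?_ ?_
  · simp only [ofPred_and, ofPred_forall]
    exact (isClosed_biInter fun z _ => isClosed_le continuous_const (eval_continuous z)).inter
      (isClosed_le (eval_continuous s₀) continuous_const)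
  · rintro l ⟨hl, hl₁⟩ z ⟨hadd, hsub⟩
    exact (abs_apply_le_of_nonneg_on hl hadd hsub).trans hl₁

theorem IsClosed.image_snd_of_subset_prod_of_isCompact {A Q : Type*} [TopologicalSpace A]
    [TopologicalSpace Q] {K : Set (A × Q)} {C : Set A} (hK : IsClosed K) (hC : IsCompact C)
    (hKC : K ⊆ C ×ˢ univ) : IsClosed (Prod.snd '' K) := by
  have : CompactSpace C := isCompact_iff_compactSpace.mp hC
  have hK' : IsClosed (Prod.map Subtype.val id ⁻¹' K : Set (C × Q)) :=
    hK.preimage (continuous_subtype_val.prodMap continuous_id)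
  convert isClosedMap_snd_of_compactSpace _ hK' using 1
  ext q
  constructor
  · rintro ⟨⟨a, q⟩, hK, rfl⟩
    exact ⟨(⟨a, (hKC hK).1⟩, q), hK, rfl⟩
  · rintro ⟨⟨a, q⟩, hK, rfl⟩
    exact ⟨(a.1, q), hK, rfl⟩

section RobustMomentCone

variable {X Z W : Type*} [NormedAddCommGroup Z] [NormedSpace ℝ Z] (S : Set Z) (U : Set W)
  (G : W → X → Z)

def dualHypograph (x : X) : Set (WeakDual ℝ Z × U × ℝ) :=
  {p | (∀ z ∈ S, 0 ≤ p.1 z) ∧ p.2.2 ≤ p.1 (G p.2.1.1 x)}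

variable {S U G} in
theorem smul_mem_dualHypograph {x : X} {l : WeakDual ℝ Z} {u : U} {r c : ℝ}
    (h : (l, u, r) ∈ dualHypograph S U G x) (hc : 0 ≤ c) :
    (c • l, u, c * r) ∈ dualHypograph S U G x :=
  ⟨fun z hz => mul_nonneg hc (h.1 z hz), mul_le_mul_of_nonneg_left h.2 hc⟩

variable [AddCommGroup X] [Module ℝ X] [TopologicalSpace X]

/-- Points `((λ, τ, u), q)`; for `τ ≠ 0`, `τ⁻¹ λ` is a multiplier exhibiting `q ∈ 𝓜₀`. -/
def normalizedCertificates (s₀ : Z) : Set ((WeakDual ℝ Z × ℝ × U) × (WeakDual ℝ X × ℝ)) :=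
  {c | 0 ≤ c.1.2.1 ∧ c.1.1 s₀ + c.1.2.1 = 1 ∧
    ∀ x, (c.1.1, c.1.2.2, c.1.2.1 * (c.2.1 x - c.2.2)) ∈ dualHypograph S U G x}

theorem isClosed_normalizedCertificates [TopologicalSpace W] (s₀ : Z)
    (husc : ∀ x, IsClosed (dualHypograph S U G x)) :
    IsClosed (normalizedCertificates S U G s₀) := by
  have hl : Continuous fun c : (WeakDual ℝ Z × ℝ × U) × (WeakDual ℝ X × ℝ) => c.1.1 :=
    continuous_fst.comp continuous_fst
  have hτ : Continuous fun c : (WeakDual ℝ Z × ℝ × U) × (WeakDual ℝ X × ℝ) => c.1.2.1 :=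
    continuous_fst.comp (continuous_snd.comp continuous_fst)
  have hu : Continuous fun c : (WeakDual ℝ Z × ℝ × U) × (WeakDual ℝ X × ℝ) => c.1.2.2 :=
    continuous_snd.comp (continuous_snd.comp continuous_fst)
  have hq (x : X) :
      Continuous fun c : (WeakDual ℝ Z × ℝ × U) × (WeakDual ℝ X × ℝ) => c.2.1 x - c.2.2 :=
    ((WeakDual.eval_continuous x).comp (continuous_fst.comp continuous_snd)).sub
      (continuous_snd.comp continuous_snd)
  simp only [normalizedCertificates, ofPred_and, ofPred_forall]
  exact (isClosed_le continuous_const hτ).inter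
    ((isClosed_eq (((WeakDual.eval_continuous s₀).comp hl).add hτ) continuous_const).inter
      (isClosed_iInter fun x => (husc x).preimage (hl.prodMk (hu.prodMk (hτ.mul (hq x))))))

variable {S U G}

theorem normalizedCertificates_subset {s₀ : Z} (hs₀ : s₀ ∈ S) :
    normalizedCertificates S U G s₀ ⊆
      ({l : WeakDual ℝ Z | (∀ z ∈ S, 0 ≤ l z) ∧ l s₀ ≤ 1} ×ˢ Icc 0 1 ×ˢ univ) ×ˢ univ := by
  rintro ⟨⟨l, τ, u⟩, q⟩ ⟨hτ, hnorm, hcert⟩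
  have hl : ∀ z ∈ S, 0 ≤ l z := (hcert 0).1
  have hl₀ := hl s₀ hs₀
  exact ⟨⟨⟨hl, by linarith⟩, ⟨hτ, by linarith⟩, mem_univ u⟩, mem_univ q⟩

theorem image_snd_normalizedCertificates {s₀ : Z} (hs₀ : s₀ ∈ S)
    (hSlater : ∀ u ∈ U, ∃ x : X, G u x ∈ -interior S) :
    Prod.snd '' normalizedCertificates S U G s₀ =
      ⋃ u ∈ U, ⋃ l ∈ {l : WeakDual ℝ Z | ∀ z ∈ S, 0 ≤ l z},
        {q : WeakDual ℝ X × ℝ | ∀ x : X, q.1 x - l (G u x) ≤ q.2} := by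
  ext q
  simp only [mem_image, mem_iUnion, mem_ofPred_eq, exists_prop]
  constructor
  · rintro ⟨⟨⟨l, τ, u⟩, q⟩, ⟨hτ, hnorm, hcert⟩, rfl⟩
    have hl : ∀ z ∈ S, 0 ≤ l z := (hcert 0).1
    have hτ₀ : τ ≠ 0 := by
      rintro rfl
      obtain ⟨x, hx⟩ := hSlater u u.2
      have hpos : 0 < l (-G u x) :=
        apply_pos_of_mem_interior hl (w := s₀) (by linarith) (mem_neg.mp hx)
      have hnonneg := (hcert x).2
      rw [map_neg] at hpos
      linarith
    refine ⟨u, u.2, τ⁻¹ • l, fun z hz => mul_nonneg (inv_nonneg.mpr hτ) (hl z hz), fun x => ?_⟩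
    have := (smul_mem_dualHypograph (hcert x) (inv_nonneg.mpr hτ)).2
    rw [inv_mul_cancel_left₀ hτ₀] at this
    linarith
  · rintro ⟨u, hu, l, hl, hq⟩
    have hl₀ := hl s₀ hs₀
    refine ⟨⟨⟨(l s₀ + 1)⁻¹ • l, (l s₀ + 1)⁻¹, ⟨u, hu⟩⟩, q⟩, ⟨by positivity, ?_, fun x => ?_⟩, rfl⟩
    · show (l s₀ + 1)⁻¹ * l s₀ + (l s₀ + 1)⁻¹ = 1
      field_simp
    · exact smul_mem_dualHypograph ⟨hl, by linarith [hq x]⟩ (by positivity)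

end RobustMomentCone

theorem stmt5
    {X Z W : Type*}
    [AddCommGroup X] [Module ℝ X] [TopologicalSpace X]
    [NormedAddCommGroup Z] [NormedSpace ℝ Z]
    [TopologicalSpace W]
    (S : Set Z)
    (hS_int : (interior S).Nonempty)
    (U : Set W) (hU_cpt : IsCompact U) (G : W → X → Z)
    (husc : ∀ x : X, IsClosed {p : WeakDual ℝ Z × U × ℝ |
      (∀ z ∈ S, 0 ≤ p.1 z) ∧ p.2.2 ≤ p.1 (G p.2.1.1 x)})
    (hSlater : ∀ u ∈ U, ∃ x : X, G u x ∈ -interior S) :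
    IsClosed (⋃ u ∈ U, ⋃ l ∈ {l : WeakDual ℝ Z | ∀ z ∈ S, 0 ≤ l z},
      {q : WeakDual ℝ X × ℝ | ∀ x : X, q.1 x - l (G u x) ≤ q.2}) := by
  obtain ⟨s₀, hs₀⟩ := hS_int
  have : CompactSpace U := isCompact_iff_compactSpace.mp hU_cpt
  rw [← image_snd_normalizedCertificates (interior_subset hs₀) hSlater]
  exact (isClosed_normalizedCertificates S U G s₀ husc).image_snd_of_subset_prod_of_isCompact
    ((WeakDual.isCompact_dualCone_inter_apply_le_one hs₀).prod (isCompact_Icc.prod isCompact_univ))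
    (normalizedCertificates_subset (interior_subset hs₀))
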